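/- arXiv:2206.03640 — 3 statements merged into one kernel-verified Lean document; each statement's English description precedes it below -/
import Mathlib

section
/- Let t0 ∈ ℝ, let c > 0, b > 0 with b > c, and let K ≥ 0. Let v : ℝ → ℝ be continuous on [t0, ∞) with v(t0) ≥ 0, and suppose that for every t ≥ t0 the upper right Dini derivative satisfies D⁺v(t) ≤ −c·v(t) + K·e^{−b(t−t0)}. Then for every t ≥ t0, v(t) ≤ e^{−c(t−t0)}·(v(t0) + K/(b−c)). -/
/-!
Compare `v` with the solution `y` of `y' = -c y + K e^{-b(t - t₀)}`, `y(t₀) = v(t₀)`, namely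
`y t = e^{-c(t - t₀)} v(t₀) + K/(b - c) (e^{-c(t - t₀)} - e^{-b(t - t₀)})`. Since the Dini bound
on `v` is the right-hand side of this linear equation, `v` cannot cross above `y`: it cannot even
touch `y + ε e^{(1-c)(t - t₀)}`, which strictly outruns the equation, and `ε → 0` gives `v ≤ y`.
Dropping the nonpositive term `-K/(b - c) e^{-b(t - t₀)}` leaves the stated bound.
-/

/-- The upper right Dini derivative of `v` at `t`:
`D⁺v(t) = limsup_{h→0⁺} (v(t+h) − v(t))/h`, valued in `EReal`. -/
noncomputable def upperDini (v : ℝ → ℝ) (t : ℝ) : EReal :=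
  Filter.limsup (fun h : ℝ => (((v (t + h) - v t) / h : ℝ) : EReal))
    (nhdsWithin 0 (Set.Ioi 0))

open Set Filter Topology Real

theorem eventually_slope_lt_of_upperDini_lt {v : ℝ → ℝ} {x : ℝ} {r : ℝ}
    (h : upperDini v x < r) : ∀ᶠ z in 𝓝[>] x, slope v x z < r := by
  have hquot : ∀ᶠ s in 𝓝[>] (0 : ℝ), (v (x + s) - v x) / s < r := by
    filter_upwards [eventually_lt_of_limsup_lt h] with s hs
    exact_mod_cast hs
  have hshift : Tendsto (fun z => z - x) (𝓝[>] x) (𝓝[>] 0) := by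
    refine tendsto_nhdsWithin_of_tendsto_nhds_of_eventually_within _ ?_ ?_
    · simpa using ((continuous_sub_right x).tendsto x).mono_left nhdsWithin_le_nhds
    · filter_upwards [self_mem_nhdsWithin] with z (hz : x < z)
      exact sub_pos.2 hz
  filter_upwards [hshift.eventually hquot] with z hz
  simpa [slope_def_field] using hz

theorem le_of_upperDini_le_of_hasDerivAt {v y g : ℝ → ℝ} {c a T : ℝ}
    (hv : ContinuousOn v (Icc a T))
    (hdini : ∀ t ∈ Ico a T, upperDini v t ≤ ((-c * v t + g t : ℝ) : EReal))
    (hy : ∀ t, HasDerivAt y (-c * y t + g t) t) (ha : v a ≤ y a) :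
    ∀ t ∈ Icc a T, v t ≤ y t := by
  have hε : ∀ ε > 0, ∀ t ∈ Icc a T, v t ≤ y t + ε * exp ((1 - c) * (t - a)) := by
    intro ε hε
    have hB : ∀ t, HasDerivAt (fun s => y s + ε * exp ((1 - c) * (s - a)))
        (-c * y t + g t + ε * (exp ((1 - c) * (t - a)) * (1 - c))) t := fun t =>
      (hy t).add ((((hasDerivAt_id t).sub_const a).const_mul (1 - c)).exp.const_mul ε
        |>.congr_deriv (by simp))
    refine image_le_of_liminf_slope_right_lt_deriv_boundary hv
      (f' := fun t => -c * v t + g t)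
      (fun t ht r hr => (eventually_slope_lt_of_upperDini_lt
        ((hdini t ht).trans_lt (EReal.coe_lt_coe_iff.2 hr))).frequently)
      (by simpa using add_le_add ha hε.le) hB ?_
    intro t _ hvt
    simp only [hvt]
    linarith [mul_pos hε (exp_pos ((1 - c) * (t - a)))]
  intro t ht
  refine le_of_forall_pos_le_add fun d hd => ?_
  have hE := exp_pos ((1 - c) * (t - a))
  simpa [div_mul_cancel₀ d hE.ne'] using hε (d / exp ((1 - c) * (t - a))) (by positivity) t ht

noncomputable def forcedDecaySolution (c b K t₀ v₀ t : ℝ) : ℝ :=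
  exp (-c * (t - t₀)) * v₀ + K / (b - c) * (exp (-c * (t - t₀)) - exp (-b * (t - t₀)))

theorem hasDerivAt_forcedDecaySolution {c b : ℝ} (hbc : b ≠ c) (K t₀ v₀ t : ℝ) :
    HasDerivAt (forcedDecaySolution c b K t₀ v₀)
      (-c * forcedDecaySolution c b K t₀ v₀ t + K * exp (-b * (t - t₀))) t := by
  have hexp (k : ℝ) : HasDerivAt (fun s => exp (k * (s - t₀))) (exp (k * (t - t₀)) * k) t :=
    (((hasDerivAt_id t).sub_const t₀).const_mul k).exp.congr_deriv (by simp)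
  refine (((hexp (-c)).mul_const v₀).add (((hexp (-c)).sub (hexp (-b))).const_mul _)).congr_deriv ?_
  have : b - c ≠ 0 := sub_ne_zero.2 hbc
  unfold forcedDecaySolution
  field_simp
  ring

theorem forcedDecaySolution_self (c b K t₀ v₀ : ℝ) :
    forcedDecaySolution c b K t₀ v₀ t₀ = v₀ := by
  simp [forcedDecaySolution]

theorem forcedDecaySolution_le {c b K : ℝ} (hbc : c < b) (hK : 0 ≤ K) (t₀ v₀ t : ℝ) :
    forcedDecaySolution c b K t₀ v₀ t ≤ exp (-c * (t - t₀)) * (v₀ + K / (b - c)) := by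
  have : 0 ≤ K / (b - c) * exp (-b * (t - t₀)) := by
    have := sub_pos.2 hbc
    positivity
  unfold forcedDecaySolution
  linarith

theorem stmt_1_general (t0 c b K : ℝ) (hbc : c < b) (hK : 0 ≤ K)
    (v : ℝ → ℝ) (hv_cont : ContinuousOn v (Set.Ici t0))
    (hdini : ∀ t, t0 ≤ t →
      upperDini v t ≤ ((-c * v t + K * Real.exp (-b * (t - t0)) : ℝ) : EReal)) :
    ∀ t, t0 ≤ t → v t ≤ Real.exp (-c * (t - t0)) * (v t0 + K / (b - c)) := by
  intro t ht
  have hvy := le_of_upperDini_le_of_hasDerivAt (hv_cont.mono Icc_subset_Ici_self)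
    (fun s hs => hdini s hs.1) (hasDerivAt_forcedDecaySolution hbc.ne' K t0 (v t0))
    (forcedDecaySolution_self c b K t0 (v t0)).ge t ⟨ht, le_rfl⟩
  exact hvy.trans (forcedDecaySolution_le hbc hK t0 (v t0) t)

theorem stmt_1 (t0 c b K : ℝ) (hc : 0 < c) (hb : 0 < b) (hbc : c < b) (hK : 0 ≤ K)
    (v : ℝ → ℝ) (hv_cont : ContinuousOn v (Set.Ici t0)) (hv0 : 0 ≤ v t0)
    (hdini : ∀ t, t0 ≤ t →
      upperDini v t ≤ ((-c * v t + K * Real.exp (-b * (t - t0)) : ℝ) : EReal)) :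
    ∀ t, t0 ≤ t → v t ≤ Real.exp (-c * (t - t0)) * (v t0 + K / (b - c)) :=
  stmt_1_general t0 c b K hbc hK v hv_cont hdini
end

section
/- Let n ∈ ℕ, t0 ∈ ℝ, and let μ > σ ≥ 0. Let α1 : [0,∞) → [0,∞) be of class K∞, let χ : [0,∞) → [0,∞), let x : ℝ → ℝⁿ be continuous, let ε : ℝ → ℝⁿ, and let v : ℝ → ℝ be continuous on [t0,∞) satisfying, for all t ≥ t0: (i) α1(‖x(t)‖) ≤ v(t); (ii) D⁺v(t) ≤ −μ·v(t) + χ(‖ε(t)‖); and (iii) χ(‖ε(t)‖) ≤ σ·α1(‖x(t)‖). Then α1(‖x(t)‖) ≤ v(t0)·e^{−(μ−σ)(t−t0)} for all t ≥ t0; consequently ‖x(t)‖ → 0 as t → ∞. -/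
/-- A function `α : [0,∞) → [0,∞)` of class `K∞`: continuous, strictly increasing,
`α(0) = 0`, nonnegative, and `α(s) → ∞` as `s → ∞`. -/
structure IsClassKInfty (α : ℝ → ℝ) : Prop where
  cont : ContinuousOn α (Set.Ici 0)
  strictMono : StrictMonoOn α (Set.Ici 0)
  zero : α 0 = 0
  nonneg : ∀ s, 0 ≤ s → 0 ≤ α s
  tendsto_atTop : Filter.Tendsto α Filter.atTop Filter.atTop

/-!
Since `χ(‖ε‖) ≤ σ α₁(‖x‖) ≤ σ v`, the Dini inequality becomes the linear differential inequality
`D⁺v ≤ -(μ - σ) v`, and Grönwall's comparison principle (which only needs right Dini derivatives)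
gives `v(t) ≤ v(t₀) e^{-(μ-σ)(t-t₀)}`. The decay of `‖x‖` follows because a strictly increasing
`α₁` with `α₁(0) = 0` sends only small arguments to small values.
-/

open Filter Set Topology

theorem frequently_slope_lt_of_upperDini_lt {v : ℝ → ℝ} {s r : ℝ}
    (h : upperDini v s < r) : ∃ᶠ z in 𝓝[>] s, (z - s)⁻¹ * (v z - v s) < r := by
  have hslope : ∀ᶠ h in 𝓝[>] (0 : ℝ), (((v (s + h) - v s) / h : ℝ) : EReal) < r :=
    eventually_lt_of_limsup_lt h
  have hshift : Tendsto (fun z : ℝ => z - s) (𝓝[>] s) (𝓝[>] 0) := by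
    refine tendsto_nhdsWithin_of_tendsto_nhds_of_eventually_within _ ?_ ?_
    · simpa using ((continuous_sub_right s).tendsto s).mono_left nhdsWithin_le_nhds
    · filter_upwards [self_mem_nhdsWithin] with z hz using sub_pos.2 (mem_Ioi.1 hz)
  refine Eventually.frequently ?_
  filter_upwards [hshift.eventually hslope] with z hz
  rw [add_sub_cancel, EReal.coe_lt_coe_iff] at hz
  rwa [inv_mul_eq_div]

theorem le_mul_exp_of_upperDini_le {v : ℝ → ℝ} {a K : ℝ} (hv : ContinuousOn v (Ici a))
    (hD : ∀ t, a ≤ t → upperDini v t ≤ ((K * v t : ℝ) : EReal)) (t : ℝ) (ht : a ≤ t) :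
    v t ≤ v a * Real.exp (K * (t - a)) := by
  have hslope : ∀ s ∈ Ico a t, ∀ r, K * v s < r →
      ∃ᶠ z in 𝓝[>] s, (z - s)⁻¹ * (v z - v s) < r := fun s hs r hr =>
    frequently_slope_lt_of_upperDini_lt ((hD s hs.1).trans_lt (EReal.coe_lt_coe_iff.2 hr))
  have H := le_gronwallBound_of_liminf_deriv_right_le (hv.mono Icc_subset_Ici_self) hslope
    le_rfl (fun s _ => (add_zero _).ge) t ⟨ht, le_rfl⟩
  rwa [gronwallBound_ε0] at H

theorem tendsto_mul_exp_neg_mul_sub_nhds_zero {c : ℝ} (hc : 0 < c) (C a : ℝ) :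
    Tendsto (fun t => C * Real.exp (-c * (t - a))) atTop (𝓝 0) := by
  have hlin : Tendsto (fun t : ℝ => -c * (t - a)) atTop atBot :=
    (tendsto_atTop_add_const_right _ _ tendsto_id).const_mul_atTop_of_neg (neg_neg_of_pos hc)
  simpa using (Real.tendsto_exp_atBot.comp hlin).const_mul C

theorem tendsto_nhds_zero_of_strictMonoOn_le {ι : Type*} {l : Filter ι} {α : ℝ → ℝ}
    (hα : StrictMonoOn α (Ici 0)) (hα0 : α 0 = 0) {u g : ι → ℝ} (hu : ∀ i, 0 ≤ u i)
    (hg : Tendsto g l (𝓝 0)) (hle : ∀ᶠ i in l, α (u i) ≤ g i) : Tendsto u l (𝓝 0) := by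
  rw [Metric.tendsto_nhds]
  intro d hd
  have hαd : 0 < α d := hα0 ▸ hα self_mem_Ici hd.le hd
  filter_upwards [hle, hg.eventually (gt_mem_nhds hαd)] with i hle hg
  rw [Real.dist_0_eq_abs, abs_of_nonneg (hu i)]
  exact (hα.lt_iff_lt (hu i) hd.le).1 (hle.trans_lt hg)

theorem stmt_10_general (n : ℕ) (t0 μ σ : ℝ) (hσ : 0 ≤ σ) (hμσ : σ < μ)
    (α1 : ℝ → ℝ) (hα1 : IsClassKInfty α1)
    (χ : ℝ → ℝ)
    (x : ℝ → EuclideanSpace ℝ (Fin n))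
    (ε : ℝ → EuclideanSpace ℝ (Fin n))
    (v : ℝ → ℝ) (hv_cont : ContinuousOn v (Set.Ici t0))
    (h1 : ∀ t, t0 ≤ t → α1 ‖x t‖ ≤ v t)
    (h2 : ∀ t, t0 ≤ t → upperDini v t ≤ ((-μ * v t + χ ‖ε t‖ : ℝ) : EReal))
    (h3 : ∀ t, t0 ≤ t → χ ‖ε t‖ ≤ σ * α1 ‖x t‖) :
    (∀ t, t0 ≤ t → α1 ‖x t‖ ≤ v t0 * Real.exp (-(μ - σ) * (t - t0))) ∧
    Filter.Tendsto (fun t => ‖x t‖) Filter.atTop (nhds 0) := by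
  have hD : ∀ t, t0 ≤ t → upperDini v t ≤ ((-(μ - σ) * v t : ℝ) : EReal) := by
    intro t ht
    refine (h2 t ht).trans (EReal.coe_le_coe_iff.2 ?_)
    nlinarith [h3 t ht, mul_le_mul_of_nonneg_left (h1 t ht) hσ]
  have hbound : ∀ t, t0 ≤ t → α1 ‖x t‖ ≤ v t0 * Real.exp (-(μ - σ) * (t - t0)) :=
    fun t ht => (h1 t ht).trans (le_mul_exp_of_upperDini_le hv_cont hD t ht)
  exact ⟨hbound, tendsto_nhds_zero_of_strictMonoOn_le hα1.strictMono hα1.zero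
    (fun t => norm_nonneg _) (tendsto_mul_exp_neg_mul_sub_nhds_zero (sub_pos.2 hμσ) _ _)
    ((eventually_ge_atTop t0).mono hbound)⟩

theorem stmt_10 (n : ℕ) (t0 μ σ : ℝ) (hσ : 0 ≤ σ) (hμσ : σ < μ)
    (α1 : ℝ → ℝ) (hα1 : IsClassKInfty α1)
    (χ : ℝ → ℝ) (hχ_nonneg : ∀ s, 0 ≤ s → 0 ≤ χ s)
    (x : ℝ → EuclideanSpace ℝ (Fin n)) (hx_cont : Continuous x)
    (ε : ℝ → EuclideanSpace ℝ (Fin n))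
    (v : ℝ → ℝ) (hv_cont : ContinuousOn v (Set.Ici t0))
    (h1 : ∀ t, t0 ≤ t → α1 ‖x t‖ ≤ v t)
    (h2 : ∀ t, t0 ≤ t → upperDini v t ≤ ((-μ * v t + χ ‖ε t‖ : ℝ) : EReal))
    (h3 : ∀ t, t0 ≤ t → χ ‖ε t‖ ≤ σ * α1 ‖x t‖) :
    (∀ t, t0 ≤ t → α1 ‖x t‖ ≤ v t0 * Real.exp (-(μ - σ) * (t - t0))) ∧
    Filter.Tendsto (fun t => ‖x t‖) Filter.atTop (nhds 0) :=
  stmt_10_general n t0 μ σ hσ hμσ α1 hα1 χ x ε v hv_cont h1 h2 h3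
end

section
/- Let n ∈ ℕ, d > 0, q > 0, and let x : ℝ → ℝⁿ be continuous. Define v2 : ℝ → ℝ by v2(t) = ∫_{t−d}^{t} ‖x(s)‖² · ( ((d+s−t)/d)·q + 1 ) ds. Then v2 is differentiable on ℝ and, for every t, v2'(t) = (q+1)·‖x(t)‖² − ‖x(t−d)‖² − (q/d) · ∫_{t−d}^{t} ‖x(s)‖² ds. -/
/-!
Splitting the weight as `(d + s - t) / d * q + 1 = (q + 1) - (q / d) * (t - s)` reduces the
claim to two moving-window integrals: `∫_{t-d}^t f`, whose derivative is `f t - f (t - d)` by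
the fundamental theorem of calculus, and `∫_{t-d}^t (t - s) f(s) ds = t ∫ f - ∫ s f(s) ds`,
whose derivative is then `∫_{t-d}^t f - d f(t - d)` by the product rule.
-/

open intervalIntegral

variable {E : Type*} [NormedAddCommGroup E] [NormedSpace ℝ E] [CompleteSpace E]
  {f : ℝ → E}

theorem Continuous.hasDerivAt_integral_window (hf : Continuous f) (d t : ℝ) :
    HasDerivAt (fun t => ∫ s in (t - d)..t, f s) (f t - f (t - d)) t := by
  have hsplit : ∀ u : ℝ,
      ∫ s in (u - d)..u, f s = (∫ s in (0 : ℝ)..u, f s) - ∫ s in (0 : ℝ)..(u - d), f s :=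
    fun u => (integral_interval_sub_left (hf.intervalIntegrable _ _)
      (hf.intervalIntegrable _ _)).symm
  simp_rw [hsplit]
  have hshift : HasDerivAt (fun u => ∫ s in (0 : ℝ)..(u - d), f s) (f (t - d)) t := by
    simpa using ((hf.integral_hasStrictDerivAt 0 (t - d)).hasDerivAt).comp_sub_const t d
  exact (hf.integral_hasStrictDerivAt 0 t).hasDerivAt.sub hshift

theorem Continuous.hasDerivAt_integral_sub_smul_window (hf : Continuous f) (d t : ℝ) :
    HasDerivAt (fun t => ∫ s in (t - d)..t, (t - s) • f s)
      ((∫ s in (t - d)..t, f s) - d • f (t - d)) t := by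
  have hsf : Continuous fun s : ℝ => s • f s := continuous_id.smul hf
  have hsplit : ∀ u : ℝ, ∫ s in (u - d)..u, (u - s) • f s
      = u • (∫ s in (u - d)..u, f s) - ∫ s in (u - d)..u, s • f s := by
    intro u
    simp_rw [sub_smul]
    rw [integral_sub (Continuous.intervalIntegrable (by fun_prop) _ _)
      (hsf.intervalIntegrable _ _), integral_smul]
  simp_rw [hsplit]
  refine (((hasDerivAt_id t).smul (hf.hasDerivAt_integral_window d t)).sub
    (hsf.hasDerivAt_integral_window d t)).congr_deriv ?_
  simp only [id, one_smul]
  module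

theorem stmt_16_general (n : ℕ) (d q : ℝ) (hd : 0 < d)
    (x : ℝ → EuclideanSpace ℝ (Fin n)) (hx_cont : Continuous x) :
    ∀ t : ℝ,
      HasDerivAt
        (fun t => ∫ s in (t - d)..t, ‖x s‖ ^ 2 * (((d + s - t) / d) * q + 1))
        ((q + 1) * ‖x t‖ ^ 2 - ‖x (t - d)‖ ^ 2 - (q / d) * ∫ s in (t - d)..t, ‖x s‖ ^ 2)
        t := by
  intro t
  have hf : Continuous fun s => ‖x s‖ ^ 2 := hx_cont.norm.pow 2
  have hweight : ∀ s u : ℝ, ‖x s‖ ^ 2 * (((d + s - u) / d) * q + 1)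
      = (q + 1) * ‖x s‖ ^ 2 - (q / d) * ((u - s) * ‖x s‖ ^ 2) := by
    intro s u
    field_simp
    ring
  have hsplit : ∀ u : ℝ, ∫ s in (u - d)..u, ‖x s‖ ^ 2 * (((d + s - u) / d) * q + 1)
      = (q + 1) * (∫ s in (u - d)..u, ‖x s‖ ^ 2)
        - (q / d) * ∫ s in (u - d)..u, (u - s) * ‖x s‖ ^ 2 := by
    intro u
    simp_rw [hweight]
    rw [integral_sub (Continuous.intervalIntegrable (by fun_prop) _ _)
      (Continuous.intervalIntegrable (by fun_prop) _ _), integral_const_mul, integral_const_mul]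
  have hwindow := hf.hasDerivAt_integral_window d t
  have hmoment := hf.hasDerivAt_integral_sub_smul_window d t
  simp only [smul_eq_mul] at hmoment
  simp_rw [hsplit]
  refine ((hwindow.const_mul (q + 1)).sub (hmoment.const_mul (q / d))).congr_deriv ?_
  field_simp
  ring

theorem stmt_16 (n : ℕ) (d q : ℝ) (hd : 0 < d) (hq : 0 < q)
    (x : ℝ → EuclideanSpace ℝ (Fin n)) (hx_cont : Continuous x) :
    ∀ t : ℝ,
      HasDerivAt
        (fun t => ∫ s in (t - d)..t, ‖x s‖ ^ 2 * (((d + s - t) / d) * q + 1))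
        ((q + 1) * ‖x t‖ ^ 2 - ‖x (t - d)‖ ^ 2 - (q / d) * ∫ s in (t - d)..t, ‖x s‖ ^ 2)
        t :=
  stmt_16_general n d q hd x hx_cont
end
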